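/- arXiv:2208.01264 — 5 statements merged into one kernel-verified Lean document; each statement's English description precedes it below -/
import Mathlib

section
/- If χ(y) = T̄(y) − Ma²k_x²(ū(y) − c)²/(k_x² + k_z²) is strictly positive on [y_l, y_h], and g̃ is a C² complex-valued function on [y_l, y_h] vanishing at both endpoints and satisfying d/dy((ū−c)²/χ · dg̃/dy) = (k_x²+k_z²)(ū−c)² g̃ / T̄ with real wave speed c satisfying c < min ū or c > max ū on [y_l,y_h], and (k_x,k_z) ≠ (0,0), then g̃ ≡ 0. -/
/-!
Writing `p = (ū - c)² / χ` and `q = (k_x² + k_z²)(ū - c)² / T̄`, the equation reads `(p g')' = q g`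
with `p ≥ 0` (as `χ > 0`) and `q > 0` (as `c` lies outside the range of `ū`). Then the real part
of `p g' ḡ` has derivative `q |g|² + p |g'|² ≥ 0` and vanishes at both endpoints, so it is
constant; hence `q |g|² = 0` on the open interval.
-/

open Set Filter Topology ComplexConjugate

theorem hasDerivAt_eq_zero_of_nonneg_of_eq_endpoints {a b : ℝ} {F F' : ℝ → ℝ}
    (hF : ∀ y ∈ Icc a b, HasDerivAt F (F' y) y) (hF' : ∀ y ∈ Ioo a b, 0 ≤ F' y)
    (hab : F a = F b) : ∀ y ∈ Ioo a b, F' y = 0 := by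
  have hmono : MonotoneOn F (Icc a b) :=
    monotoneOn_of_hasDerivWithinAt_nonneg (convex_Icc a b)
      (fun y hy => (hF y hy).continuousAt.continuousWithinAt)
      (fun y hy => (hF y (interior_subset hy)).hasDerivWithinAt)
      (fun y hy => hF' y (by rwa [interior_Icc] at hy))
  have hconst : EqOn F (fun _ => F a) (Icc a b) := fun y hy =>
    have hle : a ≤ b := hy.1.trans hy.2
    le_antisymm (hab ▸ hmono hy (right_mem_Icc.2 hle) hy.2) (hmono (left_mem_Icc.2 hle) hy hy.1)
  intro y hy
  have hloc : F =ᶠ[𝓝 y] fun _ => F a := hconst.eventuallyEq_of_mem (Icc_mem_nhds hy.1 hy.2)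
  exact (hF y (Ioo_subset_Icc_self hy)).unique
    ((hasDerivAt_const y (F a)).congr_of_eventuallyEq hloc)

theorem hasDerivAt_re_mul_deriv_mul_conj {p q : ℝ → ℝ} {g g' : ℝ → ℂ} {y : ℝ}
    (hg : HasDerivAt g (g' y) y)
    (hpg : HasDerivAt (fun t => (p t : ℂ) * g' t) (q y * g y) y) :
    HasDerivAt (fun t => ((p t : ℂ) * g' t * conj (g t)).re)
      (q y * Complex.normSq (g y) + p y * Complex.normSq (g' y)) y := by
  refine (Complex.reCLM.hasFDerivAt.comp_hasDerivAt y (hpg.mul hg.star)).congr_deriv ?_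
  simp only [Complex.reCLM_apply, Complex.star_def, mul_assoc, Complex.mul_conj,
    ← Complex.ofReal_mul, ← Complex.ofReal_add, Complex.ofReal_re]

theorem eq_zero_of_sturmLiouville_dirichlet {a b : ℝ} {p q : ℝ → ℝ} {g g' : ℝ → ℂ}
    (hp : ∀ y ∈ Ioo a b, 0 ≤ p y) (hq : ∀ y ∈ Ioo a b, 0 < q y)
    (hg : ∀ y ∈ Icc a b, HasDerivAt g (g' y) y)
    (hpg : ∀ y ∈ Icc a b, HasDerivAt (fun t => (p t : ℂ) * g' t) (q y * g y) y)
    (ha : g a = 0) (hb : g b = 0) : ∀ y ∈ Icc a b, g y = 0 := by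
  have hterms : ∀ y ∈ Ioo a b,
      0 ≤ q y * Complex.normSq (g y) ∧ 0 ≤ p y * Complex.normSq (g' y) := fun y hy =>
    ⟨mul_nonneg (hq y hy).le (Complex.normSq_nonneg _),
      mul_nonneg (hp y hy) (Complex.normSq_nonneg _)⟩
  have henergy := hasDerivAt_eq_zero_of_nonneg_of_eq_endpoints
    (fun y hy => hasDerivAt_re_mul_deriv_mul_conj (hg y hy) (hpg y hy))
    (fun y hy => add_nonneg (hterms y hy).1 (hterms y hy).2) (by simp [ha, hb])
  intro y hy
  rcases eq_endpoints_or_mem_Ioo_of_mem_Icc hy with rfl | rfl | hyo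
  · exact ha
  · exact hb
  · have hqg : q y * Complex.normSq (g y) = 0 :=
      ((add_eq_zero_iff_of_nonneg (hterms y hyo).1 (hterms y hyo).2).1 (henergy y hyo)).1
    exact Complex.normSq_eq_zero.1 ((mul_eq_zero.1 hqg).resolve_left (hq y hyo).ne')

theorem no_nontrivial_neutral_mode_of_chi_pos_general
    (yl yh : ℝ)
    (ubar Tbar : ℝ → ℝ) (Ma kx kz c : ℝ)
    (hT : ∀ y ∈ Icc yl yh, 0 < Tbar y)
    (hk : 0 < kx ^ 2 + kz ^ 2)
    (hchi : ∀ y ∈ Icc yl yh,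
      0 < Tbar y - Ma ^ 2 * kx ^ 2 * (ubar y - c) ^ 2 / (kx ^ 2 + kz ^ 2))
    (hc : (∀ y ∈ Icc yl yh, c < ubar y) ∨ (∀ y ∈ Icc yl yh, ubar y < c))
    (g g' : ℝ → ℂ)
    (hg : ∀ y ∈ Icc yl yh, HasDerivAt g (g' y) y)
    (hode : ∀ y ∈ Icc yl yh,
      HasDerivAt
        (fun t => (((ubar t - c) ^ 2 /
            (Tbar t - Ma ^ 2 * kx ^ 2 * (ubar t - c) ^ 2 / (kx ^ 2 + kz ^ 2)) : ℝ) : ℂ)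
          * g' t)
        ((((kx ^ 2 + kz ^ 2) * (ubar y - c) ^ 2 / Tbar y : ℝ) : ℂ) * g y) y)
    (hbl : g yl = 0) (hbh : g yh = 0) :
    ∀ y ∈ Icc yl yh, g y = 0 := by
  have hshift : ∀ y ∈ Icc yl yh, 0 < (ubar y - c) ^ 2 := fun y hy => by
    rcases hc with hlt | hgt
    exacts [sq_pos_of_pos (sub_pos.2 (hlt y hy)), sq_pos_of_neg (sub_neg.2 (hgt y hy))]
  refine eq_zero_of_sturmLiouville_dirichlet (fun y hy => ?_) (fun y hy => ?_) hg hode hbl hbh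
  all_goals replace hy := Ioo_subset_Icc_self hy
  · exact (div_pos (hshift y hy) (hchi y hy)).le
  · exact div_pos (mul_pos hk (hshift y hy)) (hT y hy)

/-- If χ > 0 on [y_l,y_h] and g̃ is C², vanishes at endpoints, satisfies the
compressible Rayleigh equation in g̃-form with real wave speed c outside the range of ū,
and (k_x,k_z) ≠ (0,0), then g̃ ≡ 0. -/
theorem no_nontrivial_neutral_mode_of_chi_pos
    (yl yh : ℝ) (hy : yl < yh)
    (ubar Tbar : ℝ → ℝ) (Ma kx kz c : ℝ)
    (hucont : ContinuousOn ubar (Icc yl yh))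
    (hTcont : ContinuousOn Tbar (Icc yl yh))
    (hT : ∀ y ∈ Icc yl yh, 0 < Tbar y)
    (hMa : 0 < Ma) (hk : 0 < kx ^ 2 + kz ^ 2)
    (hchi : ∀ y ∈ Icc yl yh,
      0 < Tbar y - Ma ^ 2 * kx ^ 2 * (ubar y - c) ^ 2 / (kx ^ 2 + kz ^ 2))
    (hc : (∀ y ∈ Icc yl yh, c < ubar y) ∨ (∀ y ∈ Icc yl yh, ubar y < c))
    (g g' : ℝ → ℂ)
    (hg : ∀ y ∈ Icc yl yh, HasDerivAt g (g' y) y)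
    (hg'cont : ContinuousOn g' (Icc yl yh))
    (hode : ∀ y ∈ Icc yl yh,
      HasDerivAt
        (fun t => (((ubar t - c) ^ 2 /
            (Tbar t - Ma ^ 2 * kx ^ 2 * (ubar t - c) ^ 2 / (kx ^ 2 + kz ^ 2)) : ℝ) : ℂ)
          * g' t)
        ((((kx ^ 2 + kz ^ 2) * (ubar y - c) ^ 2 / Tbar y : ℝ) : ℂ) * g y) y)
    (hbl : g yl = 0) (hbh : g yh = 0) :
    ∀ y ∈ Icc yl yh, g y = 0 :=
  no_nontrivial_neutral_mode_of_chi_pos_general yl yh ubar Tbar Ma kx kz c hT hk hchi hc g g' hg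
    hode hbl hbh
end

section
/- Suppose g̃ : [y_l, y_h] → ℂ is C², vanishes at both endpoints, is not identically zero, and satisfies the compressible Rayleigh equation d/dy((ū−c)²/χ · dg̃/dy) = (k_x²+k_z²)(ū−c)² g̃ / T̄, where c is real (neutral mode), c is outside [min ū, max ū], and (k_x,k_z) ≠ (0,0). Then χ(y₀) < 0 for some y₀ ∈ (y_l, y_h). -/
open Set

/-- a nontrivial neutral inviscid mode (real wave speed c outside the range of ū)
of the compressible Rayleigh equation in g̃-form requires χ < 0 somewhere in the flow. -/
theorem chi_neg_of_nontrivial_neutral_mode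
    (yl yh : ℝ) (hy : yl < yh)
    (ubar Tbar : ℝ → ℝ) (Ma kx kz c : ℝ)
    (hucont : ContinuousOn ubar (Icc yl yh))
    (hTcont : ContinuousOn Tbar (Icc yl yh))
    (hT : ∀ y ∈ Icc yl yh, 0 < Tbar y)
    (hMa : 0 < Ma) (hk : 0 < kx ^ 2 + kz ^ 2)
    (hc : (∀ y ∈ Icc yl yh, c < ubar y) ∨ (∀ y ∈ Icc yl yh, ubar y < c))
    (g g' : ℝ → ℂ)
    (hg : ∀ y ∈ Icc yl yh, HasDerivAt g (g' y) y)
    (hg'cont : ContinuousOn g' (Icc yl yh))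
    (hode : ∀ y ∈ Icc yl yh,
      HasDerivAt
        (fun t => (((ubar t - c) ^ 2 /
            (Tbar t - Ma ^ 2 * kx ^ 2 * (ubar t - c) ^ 2 / (kx ^ 2 + kz ^ 2)) : ℝ) : ℂ)
          * g' t)
        ((((kx ^ 2 + kz ^ 2) * (ubar y - c) ^ 2 / Tbar y : ℝ) : ℂ) * g y) y)
    (hbl : g yl = 0) (hbh : g yh = 0)
    (hne : ¬ ∀ y ∈ Icc yl yh, g y = 0) :
    ∃ y₀ ∈ Ioo yl yh,
      Tbar y₀ - Ma ^ 2 * kx ^ 2 * (ubar y₀ - c) ^ 2 / (kx ^ 2 + kz ^ 2) < 0 := by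

  by_contra hcon
  push_neg at hcon
  have hsub : Ioo yl yh ⊆ Icc yl yh := Ioo_subset_Icc_self
  -- χ, P, Q abbreviations
  set χ : ℝ → ℝ := fun t =>
    Tbar t - Ma ^ 2 * kx ^ 2 * (ubar t - c) ^ 2 / (kx ^ 2 + kz ^ 2) with hχdef
  set P : ℝ → ℝ := fun t => (ubar t - c) ^ 2 / χ t with hPdef
  set Q : ℝ → ℝ := fun t => (kx ^ 2 + kz ^ 2) * (ubar t - c) ^ 2 / Tbar t with hQdef
  have hsq : ∀ y ∈ Icc yl yh, 0 < (ubar y - c) ^ 2 := by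
    intro y hy
    have hne0 : ubar y - c ≠ 0 := by
      rcases hc with h | h
      · exact sub_ne_zero.2 (ne_of_gt (h y hy))
      · exact sub_ne_zero.2 (ne_of_lt (h y hy))
    exact lt_of_le_of_ne (sq_nonneg _) (Ne.symm (pow_ne_zero 2 hne0))
  have hQpos : ∀ y ∈ Icc yl yh, 0 < Q y := by
    intro y hy
    exact div_pos (mul_pos hk (hsq y hy)) (hT y hy)
  have hPnn : ∀ y ∈ Ioo yl yh, 0 ≤ P y := by
    intro y hy
    exact div_nonneg (sq_nonneg _) (hcon y hy)
  -- the energy function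
  set F : ℝ → ℝ := fun t => ((starRingEnd ℂ) (g t) * ((P t : ℂ) * g' t)).re with hFdef
  have hode' : ∀ y ∈ Icc yl yh,
      HasDerivAt (fun t => ((P t : ℂ) * g' t)) ((Q y : ℂ) * g y) y := hode
  have hFderiv : ∀ y ∈ Icc yl yh,
      HasDerivAt F (P y * Complex.normSq (g' y) + Q y * Complex.normSq (g y)) y := by
    intro y hy
    have h1 : HasDerivAt (fun t => (starRingEnd ℂ) (g t)) ((starRingEnd ℂ) (g' y)) y :=
      (hg y hy).star
    have h2 := h1.mul (hode' y hy)
    have h3 : HasDerivAt (fun t => Complex.reCLM ((starRingEnd ℂ) (g t) * ((P t : ℂ) * g' t)))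
        (Complex.reCLM ((starRingEnd ℂ) (g' y) * ((P y : ℂ) * g' y)
          + (starRingEnd ℂ) (g y) * ((Q y : ℂ) * g y))) y :=
      Complex.reCLM.hasFDerivAt.comp_hasDerivAt y h2
    refine h3.congr_deriv ?_
    simp only [Complex.reCLM_apply, Complex.add_re, Complex.mul_re, Complex.mul_im,
      Complex.conj_re, Complex.conj_im, Complex.ofReal_re, Complex.ofReal_im,
      Complex.normSq_apply]
    ring
  have hFcont : ContinuousOn F (Icc yl yh) := fun y hy =>
    (hFderiv y hy).continuousAt.continuousWithinAt
  have hFdiff : DifferentiableOn ℝ F (interior (Icc yl yh)) := by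
    rw [interior_Icc]
    exact fun y hy => ((hFderiv y (hsub hy)).differentiableAt).differentiableWithinAt
  have hmono : MonotoneOn F (Icc yl yh) := by
    apply monotoneOn_of_deriv_nonneg (convex_Icc yl yh) hFcont hFdiff
    intro y hy
    rw [interior_Icc] at hy
    rw [(hFderiv y (hsub hy)).deriv]
    have := hQpos y (hsub hy)
    have := hPnn y hy
    have := Complex.normSq_nonneg (g y)
    have := Complex.normSq_nonneg (g' y)
    positivity
  have hFl : F yl = 0 := by simp [hFdef, hbl]
  have hFh : F yh = 0 := by simp [hFdef, hbh]
  have hylm : yl ∈ Icc yl yh := left_mem_Icc.2 hy.le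
  have hyhm : yh ∈ Icc yl yh := right_mem_Icc.2 hy.le
  have hF0 : ∀ y ∈ Icc yl yh, F y = 0 := by
    intro y hym
    have h1 := hmono hylm hym hym.1
    have h2 := hmono hym hyhm hym.2
    rw [hFl] at h1; rw [hFh] at h2
    linarith
  have hgz : ∀ y ∈ Ioo yl yh, g y = 0 := by
    intro y hym
    have hnhds : Icc yl yh ∈ nhds y := Icc_mem_nhds hym.1 hym.2
    have hEq : F =ᶠ[nhds y] fun _ => (0 : ℝ) :=
      Filter.eventuallyEq_of_mem hnhds (fun t ht => hF0 t ht)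
    have hzero : HasDerivAt F 0 y := (hasDerivAt_const y (0 : ℝ)).congr_of_eventuallyEq hEq
    have huniq := (hFderiv y (hsub hym)).unique hzero
    have h1 : 0 ≤ P y * Complex.normSq (g' y) :=
      mul_nonneg (hPnn y hym) (Complex.normSq_nonneg _)
    have h2 : 0 ≤ Q y * Complex.normSq (g y) :=
      mul_nonneg (hQpos y (hsub hym)).le (Complex.normSq_nonneg _)
    have h3 : Q y * Complex.normSq (g y) = 0 := by linarith
    have h4 : Complex.normSq (g y) = 0 := by
      rcases mul_eq_zero.1 h3 with h | h
      · exact absurd h (ne_of_gt (hQpos y (hsub hym)))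
      · exact h
    exact Complex.normSq_eq_zero.1 h4
  apply hne
  intro y hym
  rcases eq_or_lt_of_le hym.1 with h1 | h1
  · rw [← h1]; exact hbl
  rcases eq_or_lt_of_le hym.2 with h2 | h2
  · rw [h2]; exact hbh
  exact hgz y ⟨h1, h2⟩
end

section
/- Under the hypotheses of the semicircle setup (∫(Ψ − (ū−c)²Φ)dy = 0 with Φ ≥ 0 not identically zero, Ψ ≥ 0 continuous, c_I ≠ 0), the modulus of the wave speed satisfies min(ū²) ≤ |c|² ≤ max(ū²). -/
open Set MeasureTheory

/-- under the semicircle setup, min(ū²) ≤ |c|² ≤ max(ū²). -/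
theorem modulus_wave_speed_bounds
    (yl yh : ℝ) (hy : yl < yh)
    (ubar Φ Ψ : ℝ → ℝ) (c : ℂ)
    (hucont : ContinuousOn ubar (Icc yl yh))
    (hΦcont : ContinuousOn Φ (Icc yl yh))
    (hΨcont : ContinuousOn Ψ (Icc yl yh))
    (hΦnonneg : ∀ y ∈ Icc yl yh, 0 ≤ Φ y)
    (hΨnonneg : ∀ y ∈ Icc yl yh, 0 ≤ Ψ y)
    (hΦne : ∃ y ∈ Icc yl yh, Φ y ≠ 0)
    (hcI : c.im ≠ 0)
    (hint : (∫ y in yl..yh, ((Ψ y : ℂ) - ((ubar y : ℂ) - c) ^ 2 * (Φ y : ℂ))) = 0) :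
    sInf ((fun y => ubar y ^ 2) '' Icc yl yh) ≤ Complex.normSq c ∧
      Complex.normSq c ≤ sSup ((fun y => ubar y ^ 2) '' Icc yl yh) := by
  have hle : yl ≤ yh := hy.le
  have intg : ∀ f : ℝ → ℝ, ContinuousOn f (Icc yl yh) → IntervalIntegrable f volume yl yh := by
    intro f hf
    rw [← uIcc_of_le hle] at hf
    exact hf.intervalIntegrable
  have intgC : ∀ f : ℝ → ℂ, ContinuousOn f (Icc yl yh) → IntervalIntegrable f volume yl yh := by
    intro f hf
    rw [← uIcc_of_le hle] at hf
    exact hf.intervalIntegrable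
  have hgcont : ContinuousOn (fun y => ((Ψ y : ℂ) - ((ubar y : ℂ) - c) ^ 2 * (Φ y : ℂ)))
      (Icc yl yh) := by
    apply ContinuousOn.sub
    · exact Complex.continuous_ofReal.comp_continuousOn hΨcont
    · exact (((Complex.continuous_ofReal.comp_continuousOn hucont).sub continuousOn_const).pow 2).mul
        (Complex.continuous_ofReal.comp_continuousOn hΦcont)
  have hgint := intgC _ hgcont
  have hΦi := intg Φ hΦcont
  have hΨi := intg Ψ hΨcont
  have huΦi := intg _ (hucont.mul hΦcont)
  have hucΦi : IntervalIntegrable (fun y => (ubar y - c.re) * Φ y) volume yl yh :=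
    intg _ ((hucont.sub continuousOn_const).mul hΦcont)
  -- imaginary part identity : ∫ (ubar - c.re) * Φ = 0
  have hA : (∫ y in yl..yh, (ubar y - c.re) * Φ y) = 0 := by
    have h1 : (∫ y in yl..yh, ((Ψ y : ℂ) - ((ubar y : ℂ) - c) ^ 2 * (Φ y : ℂ)).im) = 0 := by
      have h := Complex.imCLM.intervalIntegral_comp_comm hgint
      rw [hint] at h
      simpa using h
    have h2 : (∫ y in yl..yh, 2 * c.im * ((ubar y - c.re) * Φ y)) = 0 := by
      rw [← h1]
      apply intervalIntegral.integral_congr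
      intro y _
      simp [pow_two, Complex.ext_iff]; ring
    rw [intervalIntegral.integral_const_mul] at h2
    rcases mul_eq_zero.mp h2 with h | h
    · exact absurd h (by simpa using hcI)
    · exact h
  -- real part identity
  have hB : (∫ y in yl..yh, (Ψ y - ((ubar y - c.re) ^ 2 - c.im ^ 2) * Φ y)) = 0 := by
    have h1 : (∫ y in yl..yh, ((Ψ y : ℂ) - ((ubar y : ℂ) - c) ^ 2 * (Φ y : ℂ)).re) = 0 := by
      have h := Complex.reCLM.intervalIntegral_comp_comm hgint
      rw [hint] at h
      simpa using h
    rw [← h1]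
    apply intervalIntegral.integral_congr
    intro y _
    simp [pow_two, Complex.ext_iff]
  -- positivity of ∫ Φ
  set IΦ : ℝ := ∫ y in yl..yh, Φ y with hIΦ
  have hIΦpos : 0 < IΦ := by
    obtain ⟨y₀, hy₀, hy₀ne⟩ := hΦne
    have hy₀pos : 0 < Φ y₀ := lt_of_le_of_ne (hΦnonneg y₀ hy₀) (Ne.symm hy₀ne)
    have hcw : ContinuousWithinAt Φ (Icc yl yh) y₀ := hΦcont y₀ hy₀
    obtain ⟨ε, hε, hball⟩ := Metric.continuousWithinAt_iff.mp hcw (Φ y₀ / 2) (by linarith)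
    set a := max yl (y₀ - ε) with ha
    set b := min yh (y₀ + ε) with hb
    have hab : a < b := by
      rcases hy₀ with ⟨h1, h2⟩
      apply max_lt <;> apply lt_min <;> linarith
    have hsub : Icc a b ⊆ Icc yl yh :=
      Icc_subset_Icc (le_max_left _ _) (min_le_left _ _)
    have hpos : ∀ x ∈ Ioo a b, 0 < Φ x := by
      intro x hx
      have hx' : x ∈ Icc yl yh := hsub (Ioo_subset_Icc_self hx)
      have hd : dist x y₀ < ε := by
        rw [Real.dist_eq, abs_lt]
        rcases hx with ⟨h1, h2⟩
        constructor
        · have := lt_of_le_of_lt (le_max_right yl (y₀ - ε)) h1; linarith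
        · have := lt_of_lt_of_le h2 (min_le_right yh (y₀ + ε)); linarith
      have h5 := hball hx' hd
      rw [Real.dist_eq] at h5
      have := abs_lt.mp h5
      linarith [this.1]
    have hup : (∫ y in a..b, Φ y) ≤ IΦ := by
      apply intervalIntegral.integral_mono_interval (le_max_left _ _) hab.le (min_le_left _ _)
      · filter_upwards [ae_restrict_mem measurableSet_Ioc] with x hx
        exact hΦnonneg x (Ioc_subset_Icc_self hx)
      · exact hΦi
    have hlow : 0 < ∫ y in a..b, Φ y := by
      apply intervalIntegral.intervalIntegral_pos_of_pos_on _ hpos hab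
      exact hΦi.mono_set (by rw [uIcc_of_le hab.le, uIcc_of_le hle]; exact hsub)
    linarith
  -- extremes of ubar
  have hIcc_cpt : IsCompact (Icc yl yh) := isCompact_Icc
  have hne : (Icc yl yh).Nonempty := nonempty_Icc.mpr hle
  obtain ⟨ymin, hyminmem, hymin⟩ := hIcc_cpt.exists_isMinOn hne hucont
  obtain ⟨ymax, hymaxmem, hymax⟩ := hIcc_cpt.exists_isMaxOn hne hucont
  have hAc : (∫ y in yl..yh, ubar y * Φ y) = c.re * IΦ := by
    have h3 : (∫ y in yl..yh, (ubar y - c.re) * Φ y)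
        = (∫ y in yl..yh, ubar y * Φ y) - c.re * IΦ := by
      rw [hIΦ, ← intervalIntegral.integral_const_mul,
        ← intervalIntegral.integral_sub (show IntervalIntegrable (fun y => ubar y * Φ y) volume yl yh from huΦi) (hΦi.const_mul _)]
      apply intervalIntegral.integral_congr; intro y _; simp; ring
    rw [hA] at h3; linarith
  have hclo : ubar ymin ≤ c.re := by
    have hmono : (∫ y in yl..yh, ubar ymin * Φ y) ≤ ∫ y in yl..yh, ubar y * Φ y := by
      apply intervalIntegral.integral_mono_on hle (hΦi.const_mul _) huΦi
      intro x hx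
      exact mul_le_mul_of_nonneg_right (hymin hx) (hΦnonneg x hx)
    rw [intervalIntegral.integral_const_mul, ← hIΦ, hAc] at hmono
    exact le_of_mul_le_mul_right hmono hIΦpos
  have hchi : c.re ≤ ubar ymax := by
    have hmono : (∫ y in yl..yh, ubar y * Φ y) ≤ ∫ y in yl..yh, ubar ymax * Φ y := by
      apply intervalIntegral.integral_mono_on hle huΦi (hΦi.const_mul _)
      intro x hx
      exact mul_le_mul_of_nonneg_right (hymax hx) (hΦnonneg x hx)
    rw [intervalIntegral.integral_const_mul, ← hIΦ, hAc] at hmono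
    exact le_of_mul_le_mul_right hmono hIΦpos
  -- IVT: ∃ y₀ ∈ Icc, ubar y₀ = c.re
  have hy0 : ∃ y₀ ∈ Icc yl yh, ubar y₀ = c.re := by
    have hsub : uIcc ymin ymax ⊆ Icc yl yh := uIcc_subset_Icc hyminmem hymaxmem
    have hivt := intermediate_value_uIcc (hucont.mono hsub)
    have hc : c.re ∈ uIcc (ubar ymin) (ubar ymax) :=
      Icc_subset_uIcc ⟨hclo, hchi⟩
    obtain ⟨y₀, hy₀mem, hy₀⟩ := hivt hc
    exact ⟨y₀, hsub hy₀mem, hy₀⟩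
  have hsqcont : ContinuousOn (fun y => ubar y ^ 2) (Icc yl yh) := hucont.pow 2
  have hsqcpt : IsCompact ((fun y => ubar y ^ 2) '' Icc yl yh) :=
    hIcc_cpt.image_of_continuousOn hsqcont
  constructor
  · obtain ⟨y₀, hy₀mem, hy₀⟩ := hy0
    have h1 : sInf ((fun y => ubar y ^ 2) '' Icc yl yh) ≤ ubar y₀ ^ 2 :=
      csInf_le hsqcpt.bddBelow (mem_image_of_mem _ hy₀mem)
    have h2 : ubar y₀ ^ 2 ≤ Complex.normSq c := by
      rw [hy₀, Complex.normSq_apply]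
      nlinarith [sq_nonneg c.im]
    linarith
  · -- key identity: ∫ ubar² Φ = ∫ Ψ + normSq c * IΦ
    have hsqΦi := intg _ (hsqcont.mul hΦcont)
    have hBcont : ContinuousOn (fun y => Ψ y - ((ubar y - c.re) ^ 2 - c.im ^ 2) * Φ y)
        (Icc yl yh) :=
      hΨcont.sub ((((hucont.sub continuousOn_const).pow 2).sub continuousOn_const).mul hΦcont)
    have hkey : (∫ y in yl..yh, ubar y ^ 2 * Φ y)
        = (∫ y in yl..yh, Ψ y) + Complex.normSq c * IΦ := by
      have e1 : (∫ y in yl..yh, ubar y ^ 2 * Φ y)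
          = (∫ y in yl..yh, (Ψ y + Complex.normSq c * Φ y + 2 * c.re * ((ubar y - c.re) * Φ y)))
            - (∫ y in yl..yh, (Ψ y - ((ubar y - c.re) ^ 2 - c.im ^ 2) * Φ y)) := by
        rw [← intervalIntegral.integral_sub
          ((hΨi.add (hΦi.const_mul _)).add (hucΦi.const_mul _)) (intg _ hBcont)]
        apply intervalIntegral.integral_congr
        intro y _
        simp only [Complex.normSq_apply]
        ring
      rw [e1, hB, intervalIntegral.integral_add (hΨi.add (hΦi.const_mul _)) (hucΦi.const_mul _),
        intervalIntegral.integral_add hΨi (hΦi.const_mul _),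
        intervalIntegral.integral_const_mul, intervalIntegral.integral_const_mul, hA, ← hIΦ]
      ring
    have hΨpos : 0 ≤ ∫ y in yl..yh, Ψ y := by
      apply intervalIntegral.integral_nonneg hle
      intro x hx
      exact hΨnonneg x hx
    set M₂ := sSup ((fun y => ubar y ^ 2) '' Icc yl yh) with hM₂
    have hup : (∫ y in yl..yh, ubar y ^ 2 * Φ y) ≤ M₂ * IΦ := by
      have hmono : (∫ y in yl..yh, ubar y ^ 2 * Φ y) ≤ ∫ y in yl..yh, M₂ * Φ y := by
        apply intervalIntegral.integral_mono_on hle hsqΦi (hΦi.const_mul _)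
        intro x hx
        exact mul_le_mul_of_nonneg_right
          (le_csSup hsqcpt.bddAbove (mem_image_of_mem _ hx)) (hΦnonneg x hx)
      rwa [intervalIntegral.integral_const_mul, ← hIΦ] at hmono
    have : Complex.normSq c * IΦ ≤ M₂ * IΦ := by linarith
    exact le_of_mul_le_mul_right this hIΦpos
end

section
/- A purely span-wise inviscid normal mode is neutrally stable: if p̂ : [y_l,y_h] → ℂ is C², not identically zero, satisfies d/dy(T̄ dp̂/dy) − (Ma²s² + T̄k_z²)p̂ = 0 with dp̂/dy = 0 at both endpoints, where T̄ > 0 is continuous and Ma > 0, k_z ∈ ℝ, then s² is real and s² ≤ −(k_z²/Ma²) min T̄; in particular Re(s)·Im(s) = 0 and if k_z ≠ 0 then s is purely imaginary and nonzero. -/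
open Set MeasureTheory intervalIntegral

/-- a purely span-wise inviscid normal mode is neutrally stable:
s² is real with s² ≤ −(k_z²/Ma²)·min T̄; in particular Re(s)·Im(s) = 0 and
for k_z ≠ 0 the exponent s is purely imaginary and nonzero. -/
theorem spanwise_mode_neutral
    (yl yh : ℝ) (hy : yl < yh)
    (Tbar : ℝ → ℝ) (Ma kz : ℝ) (s : ℂ)
    (hTcont : ContinuousOn Tbar (Icc yl yh))
    (hTpos : ∀ y ∈ Icc yl yh, 0 < Tbar y)
    (hMa : 0 < Ma)
    (p p' : ℝ → ℂ)
    (hp : ∀ y ∈ Icc yl yh, HasDerivAt p (p' y) y)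
    (hp'cont : ContinuousOn p' (Icc yl yh))
    (hode : ∀ y ∈ Icc yl yh,
      HasDerivAt (fun t => (Tbar t : ℂ) * p' t)
        (((Ma : ℂ) ^ 2 * s ^ 2 + (Tbar y : ℂ) * (kz : ℂ) ^ 2) * p y) y)
    (hbl : p' yl = 0) (hbh : p' yh = 0)
    (hne : ¬ ∀ y ∈ Icc yl yh, p y = 0) :
    (s ^ 2).im = 0 ∧
    (s ^ 2).re ≤ -(kz ^ 2 / Ma ^ 2) * sInf (Tbar '' Icc yl yh) ∧
    s.re * s.im = 0 ∧
    (kz ≠ 0 → s.re = 0 ∧ s ≠ 0) := by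
  have hle : yl ≤ yh := hy.le
  have huIcc : uIcc yl yh = Icc yl yh := uIcc_of_le hle
  -- continuity of p
  have hpc : ContinuousOn p (Icc yl yh) := fun y hy' =>
    (hp y hy').continuousAt.continuousWithinAt
  -- min of Tbar
  set m := sInf (Tbar '' Icc yl yh) with hm
  have hIccne : (Icc yl yh).Nonempty := nonempty_Icc.mpr hle
  have hcomp : IsCompact (Tbar '' Icc yl yh) :=
    (isCompact_Icc).image_of_continuousOn hTcont
  have hmmem : m ∈ Tbar '' Icc yl yh := hcomp.sInf_mem (hIccne.image _)
  have hmpos : 0 < m := by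
    obtain ⟨y0, hy0, hy0'⟩ := hmmem
    rw [← hy0']; exact hTpos y0 hy0
  have hmle : ∀ y ∈ Icc yl yh, m ≤ Tbar y := fun y hy' =>
    csInf_le hcomp.bddBelow (mem_image_of_mem _ hy')
  -- real integrals
  set A : ℝ := ∫ y in yl..yh, Complex.normSq (p y) with hA
  set D : ℝ := ∫ y in yl..yh,
      (kz ^ 2 * Tbar y * Complex.normSq (p y) + Tbar y * Complex.normSq (p' y)) with hD
  -- integrability
  have hnormSqp : ContinuousOn (fun y => Complex.normSq (p y)) (Icc yl yh) :=
    Complex.continuous_normSq.comp_continuousOn hpc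
  have hnormSqp' : ContinuousOn (fun y => Complex.normSq (p' y)) (Icc yl yh) :=
    Complex.continuous_normSq.comp_continuousOn hp'cont
  have hiA : IntervalIntegrable (fun y => Complex.normSq (p y)) volume yl yh :=
    (hnormSqp.mono (by rw [huIcc])).intervalIntegrable
  have hDint : ContinuousOn (fun y =>
      kz ^ 2 * Tbar y * Complex.normSq (p y) + Tbar y * Complex.normSq (p' y)) (Icc yl yh) :=
    ((continuousOn_const.mul hTcont).mul hnormSqp).add (hTcont.mul hnormSqp')
  have hiD : IntervalIntegrable (fun y =>
      kz ^ 2 * Tbar y * Complex.normSq (p y) + Tbar y * Complex.normSq (p' y)) volume yl yh :=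
    (hDint.mono (by rw [huIcc])).intervalIntegrable
  -- the key identity via FTC
  have hkey : (Ma : ℂ) ^ 2 * s ^ 2 * (A : ℂ) + (D : ℂ) = 0 := by
    have hderiv : ∀ y ∈ uIcc yl yh,
        HasDerivAt (fun t => (Tbar t : ℂ) * p' t * (starRingEnd ℂ) (p t))
          ((Ma : ℂ) ^ 2 * s ^ 2 * (Complex.normSq (p y) : ℂ)
            + ((kz ^ 2 * Tbar y * Complex.normSq (p y)
                + Tbar y * Complex.normSq (p' y) : ℝ) : ℂ)) y := by
      intro y hy'
      rw [huIcc] at hy'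
      have h1 := (hode y hy').mul ((hp y hy').star)
      have e3 : ((Ma : ℂ) ^ 2 * s ^ 2 + (Tbar y : ℂ) * (kz : ℂ) ^ 2) * p y * star (p y)
          + (Tbar y : ℂ) * p' y * star (p' y)
          = (Ma : ℂ) ^ 2 * s ^ 2 * (Complex.normSq (p y) : ℂ)
            + ((kz ^ 2 * Tbar y * Complex.normSq (p y)
                + Tbar y * Complex.normSq (p' y) : ℝ) : ℂ) := by
        rw [mul_assoc, mul_assoc,
          show (star (p y) : ℂ) = (starRingEnd ℂ) (p y) from rfl,
          show (star (p' y) : ℂ) = (starRingEnd ℂ) (p' y) from rfl,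
          Complex.mul_conj, Complex.mul_conj]
        push_cast
        ring
      exact e3 ▸ h1
    have hint : IntervalIntegrable (fun y =>
        (Ma : ℂ) ^ 2 * s ^ 2 * (Complex.normSq (p y) : ℂ)
          + ((kz ^ 2 * Tbar y * Complex.normSq (p y)
              + Tbar y * Complex.normSq (p' y) : ℝ) : ℂ)) volume yl yh := by
      apply ContinuousOn.intervalIntegrable
      rw [huIcc]
      exact (continuousOn_const.mul (Complex.continuous_ofReal.comp_continuousOn hnormSqp)).add
        (Complex.continuous_ofReal.comp_continuousOn hDint)
    have hFTC := integral_eq_sub_of_hasDerivAt hderiv hint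
    rw [hbl, hbh] at hFTC
    simp only [mul_zero, zero_mul, sub_zero] at hFTC
    have hi1 : IntervalIntegrable
        (fun y => (Ma : ℂ) ^ 2 * s ^ 2 * (Complex.normSq (p y) : ℂ)) volume yl yh := by
      apply ContinuousOn.intervalIntegrable
      rw [huIcc]
      exact continuousOn_const.mul (Complex.continuous_ofReal.comp_continuousOn hnormSqp)
    have hi2 : IntervalIntegrable
        (fun y => ((kz ^ 2 * Tbar y * Complex.normSq (p y)
            + Tbar y * Complex.normSq (p' y) : ℝ) : ℂ)) volume yl yh := by
      apply ContinuousOn.intervalIntegrable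
      rw [huIcc]
      exact Complex.continuous_ofReal.comp_continuousOn hDint
    rw [intervalIntegral.integral_add hi1 hi2,
      intervalIntegral.integral_const_mul, intervalIntegral.integral_ofReal,
      intervalIntegral.integral_ofReal] at hFTC
    rw [← hA, ← hD] at hFTC
    linear_combination hFTC
  -- A > 0
  have hApos : 0 < A := by
    push_neg at hne
    obtain ⟨y0, hy0, hy0ne⟩ := hne
    rw [hA]
    rw [integral_pos_iff_support_of_nonneg_ae']
    · refine ⟨hy, ?_⟩
      have hcont : ContinuousAt p y0 := (hp y0 hy0).continuousAt
      have : ∀ᶠ x in nhds y0, p x ≠ 0 := hcont.eventually_ne hy0ne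
      obtain ⟨ε, hε, hball⟩ := Metric.eventually_nhds_iff.mp this
      set a := max yl (y0 - ε)
      set b := min yh (y0 + ε)
      have hab : a < b := by
        simp only [a, b, max_lt_iff, lt_min_iff]
        obtain ⟨h1, h2⟩ := hy0
        constructor
        · exact ⟨hy, by linarith⟩
        · exact ⟨by linarith, by linarith⟩
      have hsub : Ioo a b ⊆ Function.support (fun y => Complex.normSq (p y)) ∩ Ioc yl yh := by
        intro x hx
        obtain ⟨hx1, hx2⟩ := hx
        constructor
        · have hxy : dist x y0 < ε := by
            rw [Real.dist_eq, abs_lt]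
            constructor
            · have := hx1; simp only [a, max_lt_iff] at this; linarith [this.2]
            · have := hx2; simp only [b, lt_min_iff] at this; linarith [this.2]
          exact fun h => hball hxy (Complex.normSq_eq_zero.mp h)
        · constructor
          · have := hx1; simp only [a, max_lt_iff] at this; exact this.1
          · have := hx2; simp only [b, lt_min_iff] at this; exact this.1.le
      calc (0 : ENNReal) < volume (Ioo a b) := by
            rw [Real.volume_Ioo]; exact ENNReal.ofReal_pos.mpr (by linarith)
        _ ≤ _ := measure_mono hsub
    · filter_upwards with x using Complex.normSq_nonneg _
    · exact hiA
  -- D ≥ kz^2 * m * A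
  have hDge : kz ^ 2 * m * A ≤ D := by
    have h0 : 0 ≤ ∫ y in yl..yh,
        ((kz ^ 2 * Tbar y * Complex.normSq (p y) + Tbar y * Complex.normSq (p' y))
          - kz ^ 2 * m * Complex.normSq (p y)) := by
      apply intervalIntegral.integral_nonneg hle
      intro u hu
      have h1 := hmle u hu
      have h2 := Complex.normSq_nonneg (p u)
      have h3 := Complex.normSq_nonneg (p' u)
      have h4 := (hTpos u hu).le
      nlinarith [sq_nonneg kz, mul_le_mul_of_nonneg_right h1 h2]
    rw [intervalIntegral.integral_sub hiD (hiA.const_mul _),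
      intervalIntegral.integral_const_mul] at h0
    rw [← hA, ← hD] at h0
    linarith
  -- extract real identities
  have hkey' := hkey
  rw [← Complex.ofReal_pow] at hkey'
  rw [Complex.ext_iff] at hkey'
  simp only [Complex.add_re, Complex.add_im, Complex.mul_re, Complex.mul_im,
    Complex.ofReal_re, Complex.ofReal_im, Complex.zero_re, Complex.zero_im,
    zero_mul, mul_zero, zero_add, add_zero, sub_zero, zero_sub] at hkey'
  obtain ⟨hkre, hkim⟩ := hkey'
  have hMa2 : (0 : ℝ) < Ma ^ 2 := by positivity
  have him : (s ^ 2).im = 0 := by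
    have h0 : Ma ^ 2 * (s ^ 2).im * A = Ma ^ 2 * A * (s ^ 2).im := by ring
    rw [h0] at hkim
    exact (mul_eq_zero.mp hkim).resolve_left (mul_pos hMa2 hApos).ne'
  have hre : Ma ^ 2 * (s ^ 2).re * A + D = 0 := hkre
  have hre2 : (s ^ 2).re = -D / (Ma ^ 2 * A) := by
    field_simp
    linarith
  have hmain : (s ^ 2).re ≤ -(kz ^ 2 / Ma ^ 2) * m := by
    rw [hre2, div_le_iff₀ (by positivity)]
    have heq : -(kz ^ 2 / Ma ^ 2) * m * (Ma ^ 2 * A) = -(kz ^ 2 * m * A) := by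
      field_simp
    rw [heq]
    linarith
  refine ⟨him, hmain, ?_, ?_⟩
  · have h2 : (s ^ 2).im = 2 * s.re * s.im := by
      rw [sq, Complex.mul_im]; ring
    rw [h2] at him
    linarith
  · intro hkz
    have hmneg : (s ^ 2).re < 0 := by
      have : 0 < kz ^ 2 / Ma ^ 2 * m := by positivity
      linarith [hmain]
    have hsre : (s ^ 2).re = s.re ^ 2 - s.im ^ 2 := by
      rw [sq, Complex.mul_re]; ring
    have h2 : (s ^ 2).im = 2 * s.re * s.im := by
      rw [sq, Complex.mul_im]; ring
    rw [h2] at him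
    constructor
    · by_contra hre0
      have him0 : s.im = 0 := by
        rcases mul_eq_zero.mp (by linarith : s.re * s.im = 0) with h | h
        · exact absurd h hre0
        · exact h
      rw [hsre, him0] at hmneg
      nlinarith [sq_nonneg s.re]
    · intro hs0
      rw [hs0] at hmneg
      simp at hmneg
end

section
/- Solvability condition determines the leading-order upper-branch wave speed as a real number: given a real solution v₀ of L_f(v₀) = 0 with v₀ = 0 at both walls, real coefficient functions, and real inhomogeneous operators C_f, X_f, Z_f applied to v₀, if the first correction v₁ satisfies L_f(v₁) = c₀C_f(v₀) + k_{x1}X_f(v₀) + k_{z1}Z_f(v₀) with boundary condition v₁ = 0 at both walls, and ∫ v₀⁺ C_f(v₀) dy ≠ 0 where v₀⁺ = v₀/ū solves the adjoint equation, then c₀ = −(∫ v₀⁺ (k_{x1}X_f(v₀) + k_{z1}Z_f(v₀)) dy)/(∫ v₀⁺ C_f(v₀) dy), and c₀ ∈ ℝ. -/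
open Set

/-- solvability condition for the first correction determines the leading-order
upper-branch wave speed c₀ by the Fredholm formula, and c₀ is real. -/
theorem upper_branch_solvability
    (yl yh : ℝ) (hy : yl < yh)
    (ubar Tbar chi0 v0 : ℝ → ℝ) (v1 : ℝ → ℂ)
    (k0sq kx1 kz1 : ℝ) (c0 : ℂ) (Cv Xv Zv : ℝ → ℝ)
    (hu : ContDiff ℝ 2 ubar) (hT : ContDiff ℝ 2 Tbar) (hchi : ContDiff ℝ 2 chi0)
    (hv0 : ContDiff ℝ 2 v0) (hv1 : ContDiff ℝ 2 v1)
    (hTpos : ∀ y, 0 < Tbar y) (hchine : ∀ y, chi0 y ≠ 0)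
    (huwall : ubar yl = 0 ∧ ubar yh = 0)
    (huin : ∀ y ∈ Ioo yl yh, ubar y ≠ 0)
    (hv0wall : v0 yl = 0 ∧ v0 yh = 0)
    (hCcont : Continuous Cv) (hXcont : Continuous Xv) (hZcont : Continuous Zv)
    -- v₀ is a null solution of the real Rayleigh operator L_f
    (hL0 : ∀ y,
      deriv (fun t => ubar t / chi0 t * deriv v0 t - v0 t / chi0 t * deriv ubar t) y
        - k0sq * ubar y * v0 y / Tbar y = 0)
    -- the first correction v₁ solves L_f(v₁) = c₀ C_f(v₀) + k_{x1} X_f(v₀) + k_{z1} Z_f(v₀)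
    (hL1 : ∀ y,
      deriv (fun t => ((ubar t / chi0 t : ℝ) : ℂ) * deriv v1 t
          - v1 t * ((deriv ubar t / chi0 t : ℝ) : ℂ)) y
        - ((k0sq * ubar y / Tbar y : ℝ) : ℂ) * v1 y
      = c0 * (Cv y : ℂ) + (kx1 : ℂ) * (Xv y : ℂ) + (kz1 : ℂ) * (Zv y : ℂ))
    -- upper-branch boundary condition: v₁ = 0 at both walls
    (hv1wall : v1 yl = 0 ∧ v1 yh = 0)
    (hden : (∫ y in yl..yh, v0 y / ubar y * Cv y) ≠ 0) :
    c0 = -(((∫ y in yl..yh, v0 y / ubar y * (kx1 * Xv y + kz1 * Zv y)) : ℝ) : ℂ)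
        / (((∫ y in yl..yh, v0 y / ubar y * Cv y) : ℝ) : ℂ) ∧
    c0.im = 0 := by
  obtain ⟨hul, huh⟩ := huwall
  obtain ⟨hv0l, hv0h⟩ := hv0wall
  obtain ⟨hv1l, hv1h⟩ := hv1wall
  have hchineC : ∀ t, ((chi0 t : ℝ) : ℂ) ≠ 0 := fun t => Complex.ofReal_ne_zero.mpr (hchine t)
  -- basic differentiability
  have hderiv_of_C2 : ∀ (f : ℝ → ℝ), ContDiff ℝ 2 f → ContDiff ℝ 1 (deriv f) := by
    intro f hf
    rw [show (2 : WithTop ℕ∞) = 1 + 1 by norm_num, contDiff_succ_iff_deriv] at hf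
    exact hf.2.2
  have hv1' : ContDiff ℝ 1 (deriv v1) := by
    rw [show (2 : WithTop ℕ∞) = 1 + 1 by norm_num, contDiff_succ_iff_deriv] at hv1
    exact hv1.2.2
  have hud : Differentiable ℝ ubar := hu.differentiable (by norm_num)
  have hv0d : Differentiable ℝ v0 := hv0.differentiable (by norm_num)
  have hv1d : Differentiable ℝ v1 := by
    have : ContDiff ℝ 2 v1 := ‹_›
    exact this.differentiable (by norm_num)
  have hchid : Differentiable ℝ chi0 := hchi.differentiable (by norm_num)
  have hud' : Differentiable ℝ (deriv ubar) :=
    (hderiv_of_C2 ubar hu).differentiable one_ne_zero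
  have hv0d' : Differentiable ℝ (deriv v0) :=
    (hderiv_of_C2 v0 hv0).differentiable one_ne_zero
  have hv1d' : Differentiable ℝ (deriv v1) := hv1'.differentiable one_ne_zero
  -- the three key auxiliary functions
  set W : ℝ → ℝ := fun t => ubar t / chi0 t * deriv v0 t - v0 t / chi0 t * deriv ubar t
    with hWdef
  set V : ℝ → ℂ := fun t => ((ubar t / chi0 t : ℝ) : ℂ) * deriv v1 t
      - v1 t * ((deriv ubar t / chi0 t : ℝ) : ℂ) with hVdef
  set g : ℝ → ℂ := fun t => (((chi0 t : ℝ) : ℂ))⁻¹ *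
      ((v0 t : ℂ) * deriv v1 t - v1 t * ((deriv v0 t : ℝ) : ℂ)) with hgdef
  set R : ℝ → ℂ := fun t => c0 * (Cv t : ℂ) + (kx1 : ℂ) * (Xv t : ℂ) + (kz1 : ℂ) * (Zv t : ℂ)
    with hRdef
  have hWd : Differentiable ℝ W :=
    ((hud.div hchid hchine).mul hv0d').sub ((hv0d.div hchid hchine).mul hud')
  have hVd : Differentiable ℝ V := by
    refine Differentiable.sub (Differentiable.mul ?_ hv1d') (Differentiable.mul hv1d ?_)
    · exact Complex.ofRealCLM.differentiable.comp (hud.div hchid hchine)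
    · exact Complex.ofRealCLM.differentiable.comp (hud'.div hchid hchine)
  have hgd : Differentiable ℝ g := by
    refine Differentiable.mul (Differentiable.inv ?_ hchineC) ?_
    · exact Complex.ofRealCLM.differentiable.comp hchid
    · exact ((Complex.ofRealCLM.differentiable.comp hv0d).mul hv1d').sub
        (hv1d.mul (Complex.ofRealCLM.differentiable.comp hv0d'))
  have hg1 : ContDiff ℝ 1 g := by
    refine ContDiff.mul (ContDiff.inv ?_ hchineC) ?_
    · exact Complex.ofRealCLM.contDiff.comp (hchi.of_le (by norm_num))
    · exact ((Complex.ofRealCLM.contDiff.comp (hv0.of_le (by norm_num))).mul hv1').sub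
        (((hv1.of_le (by norm_num) : ContDiff ℝ 1 v1)).mul
          (Complex.ofRealCLM.contDiff.comp (hderiv_of_C2 v0 hv0)))
  -- key pointwise identity : ubar * g' = v0 * R everywhere
  have hkey : ∀ y, (ubar y : ℂ) * deriv g y = (v0 y : ℂ) * R y := by
    intro y
    have hWy : HasDerivAt W (k0sq * ubar y * v0 y / Tbar y) y := by
      have h0 := hL0 y
      rw [sub_eq_zero] at h0
      have hd := (hWd y).hasDerivAt
      rwa [h0] at hd
    have hVy : HasDerivAt V
        (R y + ((k0sq * ubar y / Tbar y : ℝ) : ℂ) * v1 y) y := by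
      have h1 := hL1 y
      rw [sub_eq_iff_eq_add] at h1
      have hd := (hVd y).hasDerivAt
      rwa [h1] at hd
    have hA : HasDerivAt (fun t => ((ubar t : ℝ) : ℂ) * g t)
        (((deriv ubar y : ℝ) : ℂ) * g y + ((ubar y : ℝ) : ℂ) * deriv g y) y :=
      HasDerivAt.mul ((hud y).hasDerivAt.ofReal_comp) (hgd y).hasDerivAt
    have hB : HasDerivAt (fun t => ((v0 t : ℝ) : ℂ) * V t - v1 t * ((W t : ℝ) : ℂ))
        ((((deriv v0 y : ℝ) : ℂ) * V y
            + ((v0 y : ℝ) : ℂ) * (R y + ((k0sq * ubar y / Tbar y : ℝ) : ℂ) * v1 y))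
          - (deriv v1 y * ((W y : ℝ) : ℂ)
            + v1 y * ((k0sq * ubar y * v0 y / Tbar y : ℝ) : ℂ))) y :=
      HasDerivAt.sub (HasDerivAt.mul ((hv0d y).hasDerivAt.ofReal_comp) hVy)
        (HasDerivAt.mul ((hv1d y).hasDerivAt) hWy.ofReal_comp)
    have hfun : (fun t => ((ubar t : ℝ) : ℂ) * g t)
        = fun t => ((v0 t : ℝ) : ℂ) * V t - v1 t * ((W t : ℝ) : ℂ) := by
      funext t
      simp only [hgdef, hVdef, hWdef]
      push_cast
      field_simp
      ring
    rw [← hfun] at hB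
    have heq := hA.unique hB
    have hii : ((deriv v0 y : ℝ) : ℂ) * V y - deriv v1 y * ((W y : ℝ) : ℂ)
        = ((deriv ubar y : ℝ) : ℂ) * g y := by
      simp only [hgdef, hVdef, hWdef]
      push_cast
      field_simp
      ring
    have hTy : ((Tbar y : ℝ) : ℂ) ≠ 0 := Complex.ofReal_ne_zero.mpr (hTpos y).ne'
    push_cast at heq hii ⊢
    linear_combination heq + hii
  -- derivative formula on the interior
  have hderivIoo : ∀ x ∈ Ioo yl yh,
      HasDerivAt g (((v0 x / ubar x : ℝ) : ℂ) * R x) x := by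
    intro x hx
    have hux : (ubar x : ℂ) ≠ 0 := Complex.ofReal_ne_zero.mpr (huin x hx)
    have h := hkey x
    have : ((v0 x / ubar x : ℝ) : ℂ) * R x = deriv g x := by
      push_cast
      field_simp
      linear_combination -h
    exact this ▸ (hgd x).hasDerivAt
  -- integrability of the interior derivative
  set F : ℝ → ℂ := fun x => ((v0 x / ubar x : ℝ) : ℂ) * R x with hFdef
  have hFint : IntervalIntegrable F MeasureTheory.volume yl yh := by
    have hcont : Continuous (deriv g) := hg1.continuous_deriv le_rfl
    refine (hcont.intervalIntegrable yl yh).congr_ae ?_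
    have h1 : ∀ᵐ (x : ℝ) ∂(MeasureTheory.volume.restrict (uIoc yl yh)), x ∈ uIoc yl yh :=
      MeasureTheory.ae_restrict_mem measurableSet_uIoc
    have h2 : ∀ᵐ (x : ℝ) ∂(MeasureTheory.volume : MeasureTheory.Measure ℝ), x ≠ yh := by
      rw [MeasureTheory.ae_iff]
      simp [MeasureTheory.measure_singleton]
    filter_upwards [h1, MeasureTheory.ae_restrict_of_ae h2] with x hx1 hx2
    rw [uIoc_of_le hy.le] at hx1
    have hxIoo : x ∈ Ioo yl yh := ⟨hx1.1, lt_of_le_of_ne hx1.2 hx2⟩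
    exact (hderivIoo x hxIoo).deriv
  -- fundamental theorem of calculus
  have hFTC : (∫ x in yl..yh, F x) = g yh - g yl :=
    intervalIntegral.integral_eq_sub_of_hasDerivAt_of_le hy.le
      hgd.continuous.continuousOn hderivIoo hFint
  have hg0 : g yh - g yl = 0 := by
    simp [hgdef, hv0l, hv0h, hv1l, hv1h]
  -- split the integral
  set A : ℝ → ℝ := fun x => v0 x / ubar x * Cv x with hAdef
  set B : ℝ → ℝ := fun x => v0 x / ubar x * (kx1 * Xv x + kz1 * Zv x) with hBdef
  have hAint : IntervalIntegrable A MeasureTheory.volume yl yh := by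
    by_contra hc
    exact hden (intervalIntegral.integral_undef hc)
  have hAC : IntervalIntegrable (fun x => ((A x : ℝ) : ℂ)) MeasureTheory.volume yl yh := by
    rw [intervalIntegrable_iff] at hAint ⊢
    exact Complex.ofRealCLM.integrable_comp hAint
  have hBC : IntervalIntegrable (fun x => ((B x : ℝ) : ℂ)) MeasureTheory.volume yl yh := by
    have hfe : (fun x => ((B x : ℝ) : ℂ)) = fun x => F x - c0 * ((A x : ℝ) : ℂ) := by
      funext x
      simp only [hFdef, hRdef, hAdef, hBdef]
      push_cast
      ring
    rw [hfe]
    exact hFint.sub (hAC.const_mul c0)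
  have hFsplit : (fun x => F x) = fun x => c0 * ((A x : ℝ) : ℂ) + ((B x : ℝ) : ℂ) := by
    funext x
    simp only [hFdef, hRdef, hAdef, hBdef]
    push_cast
    ring
  have hzero : c0 * ((∫ x in yl..yh, A x : ℝ) : ℂ) + ((∫ x in yl..yh, B x : ℝ) : ℂ) = 0 := by
    have h := hFTC
    rw [hg0] at h
    rw [intervalIntegral.integral_congr (fun x _ => congrFun hFsplit x)] at h
    rwa [intervalIntegral.integral_add (hAC.const_mul c0) hBC,
      intervalIntegral.integral_const_mul, intervalIntegral.integral_ofReal,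
      intervalIntegral.integral_ofReal] at h
  have hdC : ((∫ x in yl..yh, A x : ℝ) : ℂ) ≠ 0 := Complex.ofReal_ne_zero.mpr hden
  have hc0 : c0 = -(((∫ x in yl..yh, B x : ℝ)) : ℂ) / ((∫ x in yl..yh, A x : ℝ) : ℂ) := by
    field_simp
    linear_combination hzero
  refine ⟨hc0, ?_⟩
  rw [hc0]
  have : -(((∫ x in yl..yh, B x : ℝ)) : ℂ) / ((∫ x in yl..yh, A x : ℝ) : ℂ)
      = (((-(∫ x in yl..yh, B x) / (∫ x in yl..yh, A x) : ℝ)) : ℂ) := by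
    push_cast
    ring
  rw [this, Complex.ofReal_im]
end
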